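/- Let x_1,…,x_n ∈ ℝ^p with n > p be points in general position. Then there exists c > 0 such that for every affine hyperplane H ⊆ ℝ^p (i.e., every set of the form {x ∈ ℝ^p : ⟨x,v⟩ = b} with v a unit vector and b ∈ ℝ), at most p of the indices i ∈ {1,…,n} satisfy dist(x_i, H) < c. Equivalently, the infimum over all affine hyperplanes H of the (p+1)-st smallest value among the distances dist(x_1,H),…,dist(x_n,H) is strictly positive. -/

import Mathlib

open Set
open scoped RealInnerProductSpace

/-- Points are in general position when no affine hyperplane contains more than `p` of them. -/
def GeneralPosition {p n : ℕ} (x : Fin n → EuclideanSpace ℝ (Fin p)) : Prop :=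
  ∀ v : EuclideanSpace ℝ (Fin p), v ≠ 0 → ∀ b : ℝ, Set.ncard {i | ⟪x i, v⟫ = b} ≤ p

/-!
For a set $S$ of more than $p$ indices the width $\max_{i \in S} ⟪x_i, v⟫ - \min_{i \in S} ⟪x_i, v⟫$ is a
continuous function of the unit normal $v$, positive by general position, hence bounded below
by some $m_S > 0$ on the compact unit sphere; whatever the offset $b$, some point of $S$ then lies
at distance at least $m_S / 2$ from the hyperplane. There are finitely many such $S$, so
$c = \min_S m_S / 2$ works.
-/

open Filter Topology Finset

section InnerProductSpace

variable {E ι : Type*} [NormedAddCommGroup E] [InnerProductSpace ℝ E]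

lemma abs_inner_sub_le_infDist_hyperplane (z : E) {v : E} (hv : ‖v‖ = 1) (b : ℝ) :
    |⟪z, v⟫ - b| ≤ Metric.infDist z {y | ⟪y, v⟫ = b} := by
  have hne : {y : E | ⟪y, v⟫ = b}.Nonempty :=
    ⟨b • v, by simp [real_inner_smul_left, hv]⟩
  refine (Metric.le_infDist hne).2 fun y hy => ?_
  calc |⟪z, v⟫ - b| = |⟪z - y, v⟫| := by rw [inner_sub_left, show ⟪y, v⟫ = b from hy]
    _ ≤ ‖z - y‖ * ‖v‖ := abs_real_inner_le_norm _ _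
    _ = dist z y := by rw [hv, mul_one, dist_eq_norm]

lemma exists_pos_forall_exists_le_abs_inner_sub [ProperSpace E] {S : Finset ι}
    (hS : S.Nonempty) (x : ι → E) (hx : ∀ v : E, v ≠ 0 → ∀ b : ℝ, ∃ i ∈ S, ⟪x i, v⟫ ≠ b) :
    ∃ c > 0, ∀ v : E, ‖v‖ = 1 → ∀ b : ℝ, ∃ i ∈ S, c ≤ |⟪x i, v⟫ - b| := by
  set width : E → ℝ := fun v => S.sup' hS (fun i => ⟪x i, v⟫) - S.inf' hS (fun i => ⟪x i, v⟫)
  have hcont : Continuous width :=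
    (Continuous.finset_sup'_apply hS fun i _ => continuous_const.inner continuous_id).sub
      (Continuous.finset_inf'_apply hS fun i _ => continuous_const.inner continuous_id)
  have hpos : ∀ v ∈ Metric.sphere (0 : E) 1, 0 < width v := by
    intro v hv
    obtain ⟨i, hi, hne⟩ := hx v (ne_zero_of_mem_unit_sphere ⟨v, hv⟩) (S.inf' hS fun i => ⟪x i, v⟫)
    exact sub_pos.2 (((S.inf'_le _ hi).lt_of_ne' hne).trans_le (S.le_sup' (fun i => ⟪x i, v⟫) hi))
  obtain ⟨m, hm, hwidth⟩ := (isCompact_sphere (0 : E) 1).exists_forall_le' hcont.continuousOn hpos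
  refine ⟨m / 2, half_pos hm, fun v hv b => ?_⟩
  obtain ⟨i, hi, hsup⟩ := S.exists_mem_eq_sup' hS fun i => ⟪x i, v⟫
  obtain ⟨j, hj, hinf⟩ := S.exists_mem_eq_inf' hS fun i => ⟪x i, v⟫
  have hm_le : m ≤ ⟪x i, v⟫ - ⟪x j, v⟫ := by
    rw [← hsup, ← hinf]
    exact hwidth v (by simpa using hv)
  by_contra! hlt
  have hi' := abs_lt.1 (hlt i hi)
  have hj' := abs_lt.1 (hlt j hj)
  linarith [hi'.2, hj'.1]

end InnerProductSpace

lemma GeneralPosition.exists_inner_ne {p n : ℕ} {x : Fin n → EuclideanSpace ℝ (Fin p)}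
    (hgen : GeneralPosition x) {S : Finset (Fin n)} (hS : p < #S)
    {v : EuclideanSpace ℝ (Fin p)} (hv : v ≠ 0) (b : ℝ) : ∃ i ∈ S, ⟪x i, v⟫ ≠ b := by
  by_contra! hS_sub
  have hcard : #S ≤ {i | ⟪x i, v⟫ = b}.ncard := by
    rw [← ncard_coe_finset]
    exact ncard_le_ncard (fun i hi => hS_sub i hi) (toFinite _)
  have := hgen v hv b
  omega

theorem general_position_hyperplane_distance_gap_general {p n : ℕ}
    (x : Fin n → EuclideanSpace ℝ (Fin p)) (hgen : GeneralPosition x) :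
    ∃ c : ℝ, 0 < c ∧ ∀ (v : EuclideanSpace ℝ (Fin p)) (b : ℝ), ‖v‖ = 1 →
      Set.ncard {i | Metric.infDist (x i) {y | ⟪y, v⟫ = b} < c} ≤ p := by
  have hsubsets : ∀ S : Finset (Fin n), ∀ᶠ c in 𝓝[>] (0 : ℝ),
      p < #S → ∀ v : EuclideanSpace ℝ (Fin p), ‖v‖ = 1 → ∀ b, ∃ i ∈ S, c ≤ |⟪x i, v⟫ - b| := by
    intro S
    by_cases hS : p < #S
    · obtain ⟨c, hc, hgap⟩ := exists_pos_forall_exists_le_abs_inner_sub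
        (card_pos.1 (p.zero_le.trans_lt hS)) x fun v hv b => hgen.exists_inner_ne hS hv b
      filter_upwards [Ioo_mem_nhdsGT hc] with c' hc' _ v hv b
      obtain ⟨i, hi, hle⟩ := hgap v hv b
      exact ⟨i, hi, hc'.2.le.trans hle⟩
    · exact Eventually.of_forall fun _ h => absurd h hS
  obtain ⟨c, hgap, hc⟩ := ((eventually_all.2 hsubsets).and self_mem_nhdsWithin).exists
  refine ⟨c, hc, fun v b hv => ?_⟩
  by_contra! hcard
  obtain ⟨i, hi, hle⟩ := hgap _ (by rwa [ncard_eq_toFinset_card'] at hcard) v hv b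
  rw [Set.mem_toFinset] at hi
  exact (hle.trans (abs_inner_sub_le_infDist_hyperplane (x i) hv b)).not_gt hi

theorem general_position_hyperplane_distance_gap {p n : ℕ} (hn : p < n)
    (x : Fin n → EuclideanSpace ℝ (Fin p)) (hgen : GeneralPosition x) :
    ∃ c : ℝ, 0 < c ∧ ∀ (v : EuclideanSpace ℝ (Fin p)) (b : ℝ), ‖v‖ = 1 →
      Set.ncard {i | Metric.infDist (x i) {y | ⟪y, v⟫ = b} < c} ≤ p :=
  general_position_hyperplane_distance_gap_general x hgen
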